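/- arXiv:1010.1406 — 3 statements merged into one kernel-verified Lean document; each statement's English description precedes it below -/
import Mathlib

section
/- Consider the idealized MASS stochastic search on a nonempty separable metric space E (equipped with its Borel σ-algebra) with target point z₀ ∈ E, defined on a probability space (Ω, ℱ, P). At each iteration I ∈ ℕ the procedure generates L ≥ 1 new candidate points Y_{I,1}, …, Y_{I,L}, where the family (Y_{I,j}) is i.i.d. across all pairs (I,j) with common law μ whose topological support is all of E. The selected points s_I : Ω → E are random variables satisfying: s_0 ∈ {Y_{0,1}, …, Y_{0,L}}, and for every I, s_{I+1}(ω) belongs to the candidate set C_{I+1}(ω) = {s_I(ω)} ∪ {Y_{I+1,1}(ω), …, Y_{I+1,L}(ω)}. Suppose there exists ε > 0 such that the selection rule satisfies: for every I and every ω, whenever min_{c ∈ C_{I+1}(ω)} d(c, z₀) ≤ ε, the selection s_{I+1}(ω) attains this minimum. Then almost surely d(s_I, z₀) → 0 as I → ∞. -/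
/-!
A fixed candidate coordinate `Y (I + 1) j₀` is an i.i.d. sequence whose law charges every ball
around `z₀`, so by the second Borel–Cantelli lemma it almost surely enters every such ball
infinitely often. Once a candidate lands within `δ ≤ ε` of `z₀`, the selection rule picks a point
at least as close, and from then on the current point is itself within `ε`, so the selected
distances never increase again: they stay below `δ` forever.
-/

open MeasureTheory ProbabilityTheory Filter Topology

section Independence

variable {Ω ι β : Type*} [MeasurableSpace Ω] [MeasurableSpace β] {P : Measure Ω}

theorem ProbabilityTheory.iIndepFun.iIndepSet_preimage {X : ι → Ω → β}
    (hind : iIndepFun X P) (hX : ∀ i, Measurable (X i)) {B : Set β} (hB : MeasurableSet B) :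
    iIndepSet (fun i => X i ⁻¹' B) P :=
  (iIndepSet_iff_meas_biInter fun i => hX i hB).2 fun S =>
    hind.measure_inter_preimage_eq_mul S fun _ _ => hB

theorem ProbabilityTheory.iIndepFun.ae_frequently_mem [IsProbabilityMeasure P]
    {X : ℕ → Ω → β} {μ : Measure β} (hind : iIndepFun X P) (hX : ∀ n, Measurable (X n))
    (hlaw : ∀ n, P.map (X n) = μ) {B : Set β} (hB : MeasurableSet B) (hμB : μ B ≠ 0) :
    ∀ᵐ ω ∂P, ∃ᶠ n in atTop, X n ω ∈ B := by
  have hmeas : ∀ n, MeasurableSet (X n ⁻¹' B) := fun n => hX n hB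
  have hsum : ∑' n, P (X n ⁻¹' B) = ⊤ := by
    simp only [← Measure.map_apply (hX _) hB, hlaw]
    exact ENNReal.tsum_const_eq_top_of_ne_zero hμB
  have hlimsup := measure_limsup_eq_one hmeas (hind.iIndepSet_preimage hX hB) hsum
  have hae : ∀ᵐ ω ∂P, ω ∈ limsup (fun n => X n ⁻¹' B) atTop :=
    (ae_mem_iff_measure_eq (MeasurableSet.measurableSet_limsup hmeas).nullMeasurableSet).2
      (by rw [hlimsup, measure_univ])
  filter_upwards [hae] with ω hω using mem_limsup_iff_frequently_mem.1 hω

theorem ProbabilityTheory.iIndepFun.ae_forall_frequently_dist_lt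
    {E : Type*} [MetricSpace E] [MeasurableSpace E] [OpensMeasurableSpace E]
    [IsProbabilityMeasure P] {X : ℕ → Ω → E} {μ : Measure E} (hind : iIndepFun X P)
    (hX : ∀ n, Measurable (X n)) (hlaw : ∀ n, P.map (X n) = μ)
    (hsupp : ∀ U : Set E, IsOpen U → U.Nonempty → 0 < μ U) (z : E) :
    ∀ᵐ ω ∂P, ∀ δ > 0, ∃ᶠ n in atTop, dist (X n ω) z < δ := by
  have hball : ∀ k : ℕ, ∀ᵐ ω ∂P, ∃ᶠ n in atTop, X n ω ∈ Metric.ball z (1 / (k + 1)) :=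
    fun k => hind.ae_frequently_mem hX hlaw Metric.isOpen_ball.measurableSet
      (hsupp _ Metric.isOpen_ball (Metric.nonempty_ball.2 Nat.one_div_pos_of_nat)).ne'
  filter_upwards [ae_all_iff.2 hball] with ω hω δ hδ
  obtain ⟨k, hk⟩ := exists_nat_one_div_lt hδ
  exact (hω k).mono fun n hn => (Metric.mem_ball.1 hn).trans hk

end Independence

/-- `a n` is the distance of the selected point to the target, `b n` that of a fresh candidate. -/
theorem tendsto_zero_of_frequently_lt_of_selection {a b : ℕ → ℝ} {ε : ℝ} (hε : 0 < ε)
    (ha : ∀ n, 0 ≤ a n) (hb : ∀ δ > 0, ∃ᶠ n in atTop, b n < δ)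
    (hstep : ∀ n, (a n ≤ ε ∨ b n ≤ ε) → a (n + 1) ≤ a n ∧ a (n + 1) ≤ b n) :
    Tendsto a atTop (𝓝 0) := by
  refine tendsto_order.2 ⟨fun c hc => Eventually.of_forall fun n => hc.trans_le (ha n),
    fun η hη => ?_⟩
  set δ := min η ε
  obtain ⟨n, hn⟩ := (hb δ (lt_min hη hε)).exists
  have hstay : ∀ m, n + 1 ≤ m → a m < δ := by
    refine Nat.le_induction ?_ fun m _ ih => ?_
    · exact (hstep n (Or.inr (hn.le.trans (min_le_right _ _)))).2.trans_lt hn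
    · exact (hstep m (Or.inl (ih.le.trans (min_le_right _ _)))).1.trans_lt ih
  exact eventually_atTop.2 ⟨n + 1, fun m hm => (hstay m hm).trans_le (min_le_left _ _)⟩

theorem mass_stochastic_search_converges_general
    {E : Type*} [MetricSpace E]
    [MeasurableSpace E] [BorelSpace E]
    {Ω : Type*} [MeasurableSpace Ω] (P : Measure Ω) [IsProbabilityMeasure P]
    (z₀ : E) (L : ℕ) (hL : 1 ≤ L)
    (Y : ℕ → Fin L → Ω → E) (μ : Measure E)
    (hYmeas : ∀ I j, Measurable (Y I j))
    (hiid : iIndepFun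
      (fun p : ℕ × Fin L => Y p.1 p.2) P)
    (hlaw : ∀ I j, Measure.map (Y I j) P = μ)
    (hsupp : ∀ U : Set E, IsOpen U → U.Nonempty → 0 < μ U)
    (s : ℕ → Ω → E)
    (ε : ℝ) (hε : 0 < ε)
    (hsel : ∀ I ω,
      (dist (s I ω) z₀ ≤ ε ∨ ∃ j, dist (Y (I + 1) j ω) z₀ ≤ ε) →
      dist (s (I + 1) ω) z₀ ≤ dist (s I ω) z₀ ∧
        ∀ j, dist (s (I + 1) ω) z₀ ≤ dist (Y (I + 1) j ω) z₀) :
    ∀ᵐ ω ∂P, Tendsto (fun I => dist (s I ω) z₀) atTop (𝓝 0) := by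
  let j₀ : Fin L := ⟨0, hL⟩
  have hinj : Function.Injective fun I : ℕ => (I + 1, j₀) := fun a b hab => by
    simpa using congrArg Prod.fst hab
  have hfresh := (hiid.precomp hinj).ae_forall_frequently_dist_lt
    (fun I => hYmeas (I + 1) j₀) (fun I => hlaw (I + 1) j₀) hsupp z₀
  filter_upwards [hfresh] with ω hω
  refine tendsto_zero_of_frequently_lt_of_selection hε (fun I => dist_nonneg) hω fun I hI => ?_
  have h := hsel I ω (hI.imp_right fun h => ⟨j₀, h⟩)
  exact ⟨h.1, h.2 j₀⟩

/-- **Idealized MASS stochastic search converges almost surely.**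
On a nonempty separable metric space `E` with its Borel σ-algebra, target `z₀ ∈ E`,
and probability space `(Ω, P)`: at each iteration the procedure generates `L ≥ 1`
i.i.d. candidates `Y I j` with common law `μ` of full topological support.  The
selected points `s I` satisfy `s 0 ∈ {Y 0 j}`, `s (I+1)` lies in the candidate set
`{s I} ∪ {Y (I+1) j}`, and whenever some candidate is within `ε` of `z₀` the
selection attains the minimal distance to `z₀` over the candidate set.  Then
almost surely `dist (s I) z₀ → 0`. -/
theorem mass_stochastic_search_converges
    {E : Type*} [MetricSpace E] [Nonempty E] [TopologicalSpace.SeparableSpace E]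
    [MeasurableSpace E] [BorelSpace E]
    {Ω : Type*} [MeasurableSpace Ω] (P : Measure Ω) [IsProbabilityMeasure P]
    (z₀ : E) (L : ℕ) (hL : 1 ≤ L)
    (Y : ℕ → Fin L → Ω → E) (μ : Measure E)
    (hYmeas : ∀ I j, Measurable (Y I j))
    (hiid : iIndepFun
      (fun p : ℕ × Fin L => Y p.1 p.2) P)
    (hlaw : ∀ I j, Measure.map (Y I j) P = μ)
    (hsupp : ∀ U : Set E, IsOpen U → U.Nonempty → 0 < μ U)
    (s : ℕ → Ω → E)
    (hsmeas : ∀ I, Measurable (s I))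
    (hs0 : ∀ ω, ∃ j, s 0 ω = Y 0 j ω)
    (hmem : ∀ I ω, s (I + 1) ω = s I ω ∨ ∃ j, s (I + 1) ω = Y (I + 1) j ω)
    (ε : ℝ) (hε : 0 < ε)
    (hsel : ∀ I ω,
      (dist (s I ω) z₀ ≤ ε ∨ ∃ j, dist (Y (I + 1) j ω) z₀ ≤ ε) →
      dist (s (I + 1) ω) z₀ ≤ dist (s I ω) z₀ ∧
        ∀ j, dist (s (I + 1) ω) z₀ ≤ dist (Y (I + 1) j ω) z₀) :
    ∀ᵐ ω ∂P, Tendsto (fun I => dist (s I ω) z₀) atTop (𝓝 0) :=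
  mass_stochastic_search_converges_general P z₀ L hL Y μ hYmeas hiid hlaw hsupp s ε hε hsel
end

section
/- Let (E, d) be a metric space, z₀ ∈ E, and let (C_I)_{I ≥ 1} be a sequence of nonempty finite subsets of E. Let s : ℕ → E be a sequence with s_{I+1} ∈ {s_I} ∪ C_{I+1} for every I, and suppose there exists ε > 0 such that whenever min_{c ∈ {s_I} ∪ C_{I+1}} d(c, z₀) ≤ ε, the element s_{I+1} attains this minimum. If for every δ with 0 < δ ≤ ε there exist I ≥ 1 and c ∈ C_I with d(c, z₀) < δ, then d(s_I, z₀) → 0 as I → ∞. -/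
open Filter Topology

/-- **Deterministic core of the MASS convergence proof.**
Let `(E, d)` be a metric space, `z₀ ∈ E`, and `(C I)` (for `I ≥ 1`) a sequence of
nonempty finite subsets of `E`.  Let `s : ℕ → E` satisfy
`s (I+1) ∈ {s I} ∪ C (I+1)` for every `I`, and suppose there is `ε > 0` such that
whenever some element of `{s I} ∪ C (I+1)` is within distance `ε` of `z₀`, the
element `s (I+1)` attains the minimal distance to `z₀` over `{s I} ∪ C (I+1)`.
If for every `δ` with `0 < δ ≤ ε` some iteration `I ≥ 1` produces a candidate
`c ∈ C I` with `dist c z₀ < δ`, then `dist (s I) z₀ → 0`. -/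
theorem mass_deterministic_selection_tendsto
    {E : Type*} [MetricSpace E] (z₀ : E)
    (C : ℕ → Set E) (hC : ∀ I, 1 ≤ I → (C I).Finite ∧ (C I).Nonempty)
    (s : ℕ → E)
    (hmem : ∀ I : ℕ, s (I + 1) ∈ insert (s I) (C (I + 1)))
    (ε : ℝ) (hε : 0 < ε)
    (hsel : ∀ I : ℕ,
      (∃ c ∈ insert (s I) (C (I + 1)), dist c z₀ ≤ ε) →
      ∀ c ∈ insert (s I) (C (I + 1)), dist (s (I + 1)) z₀ ≤ dist c z₀)
    (hclose : ∀ δ : ℝ, 0 < δ → δ ≤ ε → ∃ I, 1 ≤ I ∧ ∃ c ∈ C I, dist c z₀ < δ) :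
    Tendsto (fun I => dist (s I) z₀) atTop (𝓝 0) := by
  rw [Metric.tendsto_atTop]
  intro δ hδ
  set δ' := min δ ε with hδ'
  have hδ'0 : 0 < δ' := lt_min hδ hε
  have hδ'ε : δ' ≤ ε := min_le_right _ _
  obtain ⟨I₀, hI₀, c, hcC, hcδ⟩ := hclose δ' hδ'0 hδ'ε
  -- show for all I ≥ I₀, dist (s I) z₀ < δ'
  have key : ∀ I, I₀ ≤ I → dist (s I) z₀ < δ' := by
    intro I hI
    induction I with
    | zero => omega
    | succ n ih =>
      rcases Nat.lt_or_ge I₀ (n+1) with h | h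
      · have hn : I₀ ≤ n := by omega
        have hsn := ih hn
        have := hsel n ⟨s n, Set.mem_insert _ _, le_trans hsn.le hδ'ε⟩
          (s n) (Set.mem_insert _ _)
        exact lt_of_le_of_lt this hsn
      · have : I₀ = n + 1 := by omega
        subst this
        have hcmem : c ∈ insert (s n) (C (n+1)) := Set.mem_insert_of_mem _ hcC
        have := hsel n ⟨c, hcmem, le_trans hcδ.le hδ'ε⟩ c hcmem
        exact lt_of_le_of_lt this hcδ
  refine ⟨I₀, fun n hn => ?_⟩
  have := key n hn
  rw [Real.dist_eq, sub_zero, abs_of_nonneg dist_nonneg]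
  exact lt_of_lt_of_le this (min_le_left _ _)
end

section
/- Let (E, d) be a metric space, z₀ ∈ E, and let (C_I)_{I ≥ 1} be a sequence of nonempty finite subsets of E. Let s : ℕ → E be a sequence with s_{I+1} ∈ {s_I} ∪ C_{I+1} for every I, and suppose there exists ε > 0 such that whenever min_{c ∈ {s_I} ∪ C_{I+1}} d(c, z₀) ≤ ε, the element s_{I+1} attains this minimum. If d(s_{I₀}, z₀) ≤ ε for some index I₀, then the sequence I ↦ d(s_I, z₀) is antitone (non-increasing) for I ≥ I₀. -/
open Filter Topology

/-- **Once within `ε` of the truth, the MASS selection distance is non-increasing.**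
Let `(E, d)` be a metric space, `z₀ ∈ E`, and `(C I)` (for `I ≥ 1`) a sequence of
nonempty finite subsets of `E`.  Let `s : ℕ → E` satisfy
`s (I+1) ∈ {s I} ∪ C (I+1)` for every `I`, and suppose there is `ε > 0` such that
whenever some element of `{s I} ∪ C (I+1)` is within distance `ε` of `z₀`, the
element `s (I+1)` attains the minimal distance to `z₀` over `{s I} ∪ C (I+1)`.
If `dist (s I₀) z₀ ≤ ε` for some index `I₀`, then `I ↦ dist (s I) z₀` is
antitone (non-increasing) on `{I | I₀ ≤ I}`. -/
theorem mass_selection_distance_antitone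
    {E : Type*} [MetricSpace E] (z₀ : E)
    (C : ℕ → Set E) (hC : ∀ I, 1 ≤ I → (C I).Finite ∧ (C I).Nonempty)
    (s : ℕ → E)
    (hmem : ∀ I : ℕ, s (I + 1) ∈ insert (s I) (C (I + 1)))
    (ε : ℝ) (hε : 0 < ε)
    (hsel : ∀ I : ℕ,
      (∃ c ∈ insert (s I) (C (I + 1)), dist c z₀ ≤ ε) →
      ∀ c ∈ insert (s I) (C (I + 1)), dist (s (I + 1)) z₀ ≤ dist c z₀)
    (I₀ : ℕ) (hI₀ : dist (s I₀) z₀ ≤ ε) :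
    AntitoneOn (fun I => dist (s I) z₀) (Set.Ici I₀) := by
  have key : ∀ n, ∀ I, I₀ ≤ I → dist (s (I + n)) z₀ ≤ dist (s I) z₀ ∧ dist (s (I + n)) z₀ ≤ ε := by
    intro n
    induction n with
    | zero => intro I _; exact ⟨le_rfl, by
        induction I with
        | zero =>
          have h0 : I₀ = 0 := Nat.eq_zero_of_le_zero ‹I₀ ≤ 0›
          simpa [h0] using hI₀
        | succ k ih =>
          rcases Nat.lt_or_ge I₀ (k+1) with h | h
          · have hk : I₀ ≤ k := Nat.lt_succ_iff.mp h
            have hke := ih hk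
            exact le_trans (hsel k ⟨s k, Set.mem_insert _ _, hke⟩ (s k) (Set.mem_insert _ _)) hke
          · have : I₀ = k + 1 := le_antisymm ‹I₀ ≤ k+1› h
            exact this ▸ hI₀⟩
    | succ m ih =>
      intro I hI
      obtain ⟨h1, h2⟩ := ih I hI
      have step := hsel (I + m) ⟨s (I + m), Set.mem_insert _ _, h2⟩ (s (I + m)) (Set.mem_insert _ _)
      exact ⟨le_trans step h1, le_trans step h2⟩
  intro a ha b hb hab
  obtain ⟨n, rfl⟩ := Nat.exists_eq_add_of_le hab
  exact (key n a ha).1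
end
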